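/- arXiv:math/0404334 — 4 statements merged into one kernel-verified Lean document; each statement's English description precedes it below -/
import Mathlib

section
/- Let G(P) be a framework in R^d with points in general position such that every vertex has exactly d+1 incident edges. Then a self-stress w on G(P) is nonzero on some edge if and only if it is nonzero on every edge. Equivalently, if w is a self-stress that vanishes on some edge of a connected such framework, then w vanishes on all edges incident to the endpoints of that edge. -/
open scoped Classical

/-- `p` is in general position in `ℝ^d`: every subset of at most `d+1` points is affinely
independent. -/
def InGeneralPosition {n d : ℕ} (p : Fin n → Fin d → ℝ) : Prop :=
  ∀ s : Finset (Fin n), s.card ≤ d + 1 → AffineIndependent ℝ (fun i : s => p i)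

/-- `w` is a self-stress on the framework given by graph `G` and points `p`. -/
def IsSelfStress {n d : ℕ} (G : SimpleGraph (Fin n)) (p : Fin n → Fin d → ℝ)
    (w : Fin n → Fin n → ℝ) : Prop :=
  (∀ i j, w i j = w j i) ∧ (∀ i j, ¬ G.Adj i j → w i j = 0) ∧
    ∀ i, ∑ j, w i j • (p i - p j) = 0

/-- Affine independence from general position, stated for coefficient functions. -/
lemma gen_pos_eq_zero {n d : ℕ} {p : Fin n → Fin d → ℝ} (hgen : InGeneralPosition p)
    (t : Finset (Fin n)) (ht : t.card ≤ d + 1) (c : Fin n → ℝ)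
    (h0 : ∑ j ∈ t, c j = 0) (h1 : ∑ j ∈ t, c j • p j = 0) : ∀ j ∈ t, c j = 0 := by
  have h := affineIndependent_iff.1 (hgen t ht) Finset.univ (fun x : t => c x)
    (by rw [← Finset.sum_coe_sort t c] at h0; exact h0)
    (by rw [← Finset.sum_coe_sort t (fun j => c j • p j)] at h1; exact h1)
  intro j hj
  exact h ⟨j, hj⟩ (Finset.mem_univ _)

/-- If a self-stress vanishes on one edge at a vertex, it vanishes on all edges at that
vertex (for `(d+1)`-regular frameworks in general position). -/
lemma vertex_zero {n d : ℕ} (G : SimpleGraph (Fin n)) (p : Fin n → Fin d → ℝ)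
    (hgen : InGeneralPosition p) (hreg : ∀ v, G.degree v = d + 1)
    (w : Fin n → Fin n → ℝ) (hw : IsSelfStress G p w)
    (i j0 : Fin n) (hadj : G.Adj i j0) (h0 : w i j0 = 0) : ∀ k, w i k = 0 := by
  obtain ⟨hsymm, hzero, heq⟩ := hw
  set N := G.neighborFinset i with hN
  have hiN : i ∉ N := by simp [hN]
  have hj0N : j0 ∈ N := by simp [hN, hadj]
  -- the equilibrium sum restricts to neighbors
  have hsum : ∑ j ∈ N, w i j • (p i - p j) = 0 := by
    rw [← heq i]
    apply Finset.sum_subset (Finset.subset_univ N)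
    intro x _ hx
    have : ¬ G.Adj i x := by simpa [hN] using hx
    rw [hzero i x this, zero_smul]
  have hsplit : (∑ j ∈ N, w i j) • p i - ∑ j ∈ N, w i j • p j = 0 := by
    rw [← hsum, Finset.sum_smul]
    rw [← Finset.sum_sub_distrib]
    apply Finset.sum_congr rfl
    intro j _
    rw [smul_sub]
  set s := N.erase j0 with hs
  have hse : ∑ j ∈ s, w i j = ∑ j ∈ N, w i j := by
    rw [hs, Finset.sum_erase_eq_sub hj0N, h0, sub_zero]
  have hse2 : ∑ j ∈ s, w i j • p j = ∑ j ∈ N, w i j • p j := by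
    rw [hs, Finset.sum_erase_eq_sub hj0N, h0, zero_smul, sub_zero]
  set t := insert i s with htdef
  have his : i ∉ s := fun h => hiN (Finset.erase_subset _ _ h)
  have hcard : t.card ≤ d + 1 := by
    rw [htdef, Finset.card_insert_of_notMem his, hs, Finset.card_erase_of_mem hj0N]
    have : N.card = d + 1 := by
      rw [hN]
      simp [SimpleGraph.card_neighborFinset_eq_degree, hreg]
    omega
  set c : Fin n → ℝ := fun j => if j = i then -(∑ k ∈ N, w i k) else w i j with hc
  have hzeroall : ∀ j ∈ t, c j = 0 := by
    apply gen_pos_eq_zero hgen t hcard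
    · rw [htdef, Finset.sum_insert his]
      have : ∑ j ∈ s, c j = ∑ j ∈ s, w i j := by
        apply Finset.sum_congr rfl
        intro j hj
        have : j ≠ i := fun h => his (h ▸ hj)
        simp [hc, this]
      rw [this, hse]
      simp [hc]
    · rw [htdef, Finset.sum_insert his]
      have : ∑ j ∈ s, c j • p j = ∑ j ∈ s, w i j • p j := by
        apply Finset.sum_congr rfl
        intro j hj
        have : j ≠ i := fun h => his (h ▸ hj)
        simp [hc, this]
      rw [this, hse2]
      simp only [hc, if_pos rfl]
      rw [neg_smul, sub_eq_zero.mp hsplit]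
      simp
  intro k
  by_cases hk : G.Adj i k
  · by_cases hkj : k = j0
    · rw [hkj]; exact h0
    · have hks : k ∈ s := by
        rw [hs]
        exact Finset.mem_erase.2 ⟨hkj, by simp [hN, hk]⟩
      have hkt : k ∈ t := Finset.mem_insert_of_mem hks
      have := hzeroall k hkt
      have hki : k ≠ i := G.ne_of_adj (G.adj_symm hk)
      simpa [hc, hki] using this
  · exact hzero i k hk

/-- For a connected `(d+1)`-regular framework in general position, a self-stress is nonzero
on some edge if and only if it is nonzero on every edge. -/
theorem selfStress_nonnull_iff_nonnull_everywhere {n d : ℕ}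
    (G : SimpleGraph (Fin n)) (p : Fin n → Fin d → ℝ)
    (hgen : InGeneralPosition p) (hconn : G.Connected)
    (hreg : ∀ v, G.degree v = d + 1)
    (w : Fin n → Fin n → ℝ) (hw : IsSelfStress G p w) :
    (∃ i j, G.Adj i j ∧ w i j ≠ 0) ↔ (∀ i j, G.Adj i j → w i j ≠ 0) := by
  constructor
  · rintro ⟨i, j, hij, hne⟩ a b hab
    intro hab0
    -- the stress vanishes at every vertex, by propagation along walks
    have hZa : ∀ k, w a k = 0 := vertex_zero G p hgen hreg w hw a b hab hab0
    have hstep : ∀ u v : Fin n, (∀ k, w u k = 0) → G.Adj u v → ∀ k, w v k = 0 := by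
      intro u v hu huv
      apply vertex_zero G p hgen hreg w hw v u (G.adj_symm huv)
      rw [hw.1 v u]
      exact hu v
    have hwalk : ∀ u v : Fin n, G.Walk u v → (∀ k, w u k = 0) → ∀ k, w v k = 0 := by
      intro u v walk
      induction walk with
      | nil => exact fun h => h
      | cons h q ih => exact fun hu => ih (hstep _ _ hu h)
    obtain ⟨walk⟩ := hconn.preconnected a i
    exact hne (hwalk a i walk hZa j)
  · intro h
    obtain ⟨v⟩ := hconn.nonempty
    have : 0 < G.degree v := by rw [hreg v]; omega
    obtain ⟨u, hadj⟩ := (SimpleGraph.degree_pos_iff_exists_adj G v).mp this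
    exact ⟨v, u, hadj, h v u hadj⟩
end

section
/- Let G(P) be a framework in R^d with points in general position admitting a nonzero self-stress w, and let a be a vertex with exactly d+1 incident edges of nonzero tension, with neighbors a_0, ..., a_d on those edges. Then there exists a self-stress w^K on the complete graph on {a, a_0, ..., a_d} such that w + w^K (extended by zero) has zero tension on all edges incident to a. -/
private lemma sum_eq_sum_comp {n m : ℕ} {M : Type*} [AddCommMonoid M]
    (f : Fin m → Fin n) (hf : Function.Injective f) (h : Fin n → M)
    (h0 : ∀ j, j ∉ Set.range f → h j = 0) : ∑ j, h j = ∑ k, h (f k) := by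
  classical
  have h1 : ∑ k, h (f k) = ∑ j ∈ Finset.univ.image f, h j :=
    (Finset.sum_image (fun x _ y _ hxy => hf hxy)).symm
  rw [h1]
  refine (Finset.sum_subset (Finset.subset_univ _) ?_).symm
  intro x _ hx
  apply h0
  rintro ⟨k, rfl⟩
  exact hx (Finset.mem_image_of_mem f (Finset.mem_univ k))

/-- If a vertex `a` of a self-stressed general-position framework has exactly `d+1`
incident edges of nonzero tension (to the neighbors `f 0, …, f d`), then one can add a
self-stress of the atom on `{a, f 0, …, f d}` so that all edges incident to `a` get zero
tension. -/
theorem atom_cancels_vertex {n d : ℕ} (G : SimpleGraph (Fin n))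
    (p : Fin n → Fin d → ℝ) (hgen : InGeneralPosition p)
    (w : Fin n → Fin n → ℝ) (hw : IsSelfStress G p w) (hwne : w ≠ 0)
    (a : Fin n) (f : Fin (d + 1) → Fin n) (hf : Function.Injective f)
    (ha : ∀ k, G.Adj a (f k) ∧ w a (f k) ≠ 0)
    (honly : ∀ j, G.Adj a j → w a j ≠ 0 → ∃ k, f k = j) :
    ∃ wK : Fin n → Fin n → ℝ,
      (∀ i j, wK i j = wK j i) ∧
      (∀ i j, wK i j ≠ 0 → i ≠ j ∧ i ∈ insert a (Set.range f) ∧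
        j ∈ insert a (Set.range f)) ∧
      (∀ i, ∑ j, wK i j • (p i - p j) = 0) ∧
      ∀ j, G.Adj a j → w a j + wK a j = 0 := by
  classical
  obtain ⟨hsym, hsup, heq⟩ := hw
  -- support of `w a`
  have hsupp : ∀ j, j ∉ Set.range f → w a j = 0 := by
    intro j hj
    by_contra hne
    have hadj : G.Adj a j := by
      by_contra hnadj
      exact hne (hsup a j hnadj)
    obtain ⟨k, hk⟩ := honly j hadj hne
    exact hj ⟨k, hk⟩
  have hane : ∀ k, f k ≠ a := fun k => ((ha k).1).ne'
  set c : ℝ := ∑ k, w a (f k) with hc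
  set lam : Fin n → ℝ := fun i => if i = a then -c else w a i with hlam
  have hlam_a : lam a = -c := by simp [hlam]
  have hlam_ne : ∀ j, j ≠ a → lam j = w a j := by
    intro j hj; simp [hlam, hj]
  have hlam_f : ∀ k, lam (f k) = w a (f k) := fun k => hlam_ne _ (hane k)
  -- total sum of w a over all vertices is c
  have hwsum : ∑ j, w a j = c := by
    rw [hc]; exact sum_eq_sum_comp f hf (w a) hsupp
  have hwsump : ∑ j, w a j • p j = c • p a := by
    have h0 := heq a
    have h1 : ∑ j, (w a j • p a - w a j • p j) = 0 := by
      simpa [smul_sub] using h0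
    rw [Finset.sum_sub_distrib, ← Finset.sum_smul, hwsum, sub_eq_zero] at h1
    exact h1.symm
  -- c ≠ 0 by affine independence of the neighbors
  have hcne : c ≠ 0 := by
    intro hc0
    have himg : (Finset.univ.image f).card ≤ d + 1 := by
      rw [Finset.card_image_of_injective _ hf, Finset.card_univ, Fintype.card_fin]
    have hai := hgen _ himg
    have hmem : ∀ k, f k ∈ Finset.univ.image f :=
      fun k => Finset.mem_image_of_mem f (Finset.mem_univ k)
    have hai2 : AffineIndependent ℝ (fun k : Fin (d + 1) => p (f k)) := by
      have := hai.comp_embedding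
        ⟨fun k => (⟨f k, hmem k⟩ : (Finset.univ.image f : Finset (Fin n))),
          fun x y hxy => hf (by simpa using hxy)⟩
      exact this
    have hkey := affineIndependent_iff.mp hai2 Finset.univ (fun k => w a (f k))
      (by simpa [← hc] using hc0)
      (by
        have : ∑ k, w a (f k) • p (f k) = c • p a := by
          rw [← hwsump]
          exact (sum_eq_sum_comp f hf (fun j => w a j • p j)
            (fun j hj => by simp [hsupp j hj])).symm
        rw [this, hc0, zero_smul])
    exact (ha 0).2 (hkey 0 (Finset.mem_univ 0))
  -- the two linear relations satisfied by lam
  have hlamsum : ∑ j, lam j = 0 := by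
    have h1 : ∀ j, lam j = w a j + (if j = a then -c else 0) := by
      intro j
      by_cases hj : j = a
      · rw [hj]
        simp [hlam_a, hsup a a (G.loopless.irrefl a)]
      · simp [hlam_ne j hj, hj]
    rw [Finset.sum_congr rfl (fun j _ => h1 j), Finset.sum_add_distrib, hwsum]
    simp [Finset.sum_ite_eq']
  have hlamsump : ∑ j, lam j • p j = 0 := by
    have h1 : ∀ j, lam j • p j = w a j • p j + (if j = a then -c else 0) • p j := by
      intro j
      by_cases hj : j = a
      · rw [hj]
        simp [hlam_a, hsup a a (G.loopless.irrefl a)]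
      · simp [hlam_ne j hj, hj]
    rw [Finset.sum_congr rfl (fun j _ => h1 j), Finset.sum_add_distrib, hwsump]
    have h2 : ∀ j : Fin n, (if j = a then (-c : ℝ) else 0) • p j
        = if j = a then (-c : ℝ) • p j else 0 := by
      intro j; by_cases hj : j = a <;> simp [hj]
    rw [Finset.sum_congr rfl (fun j _ => h2 j), Finset.sum_ite_eq' Finset.univ a]
    simp
  -- the atom stress
  refine ⟨fun i j => if i = j then 0 else c⁻¹ * lam i * lam j, ?_, ?_, ?_, ?_⟩
  · intro i j
    by_cases h : i = j
    · simp [h]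
    · simp [h, Ne.symm h]; ring
  · intro i j hij
    by_cases h : i = j
    · simp [h] at hij
    · simp only [h, if_false] at hij
      have hli : lam i ≠ 0 := fun h0 => hij (by rw [h0]; ring)
      have hlj : lam j ≠ 0 := fun h0 => hij (by rw [h0]; ring)
      refine ⟨h, ?_, ?_⟩
      · by_cases hi : i = a
        · exact Or.inl hi
        · right
          by_contra hr
          exact hli (by rw [hlam_ne i hi]; exact hsupp i hr)
      · by_cases hjj : j = a
        · exact Or.inl hjj
        · right
          by_contra hr
          exact hlj (by rw [hlam_ne j hjj]; exact hsupp j hr)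
  · intro i
    have hterm : ∀ j, (if i = j then (0:ℝ) else c⁻¹ * lam i * lam j) • (p i - p j)
        = (c⁻¹ * lam i) • (lam j • (p i - p j)) := by
      intro j
      by_cases h : i = j
      · simp [h]
      · rw [if_neg h, mul_smul]
    rw [Finset.sum_congr rfl (fun j _ => hterm j), ← Finset.smul_sum]
    have : ∑ j, lam j • (p i - p j) = 0 := by
      have : ∑ j, (lam j • p i - lam j • p j) = 0 := by
        rw [Finset.sum_sub_distrib, ← Finset.sum_smul, hlamsum, hlamsump, zero_smul, sub_zero]
      simpa [smul_sub] using this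
    rw [this, smul_zero]
  · intro j hadj
    have hjne : a ≠ j := hadj.ne
    show w a j + (if a = j then 0 else c⁻¹ * lam a * lam j) = 0
    rw [if_neg hjne, hlam_a, hlam_ne j (Ne.symm hjne)]
    field_simp
    ring
end

section
/- Let P ⊂ R^d be in general position and let G(P) be a framework admitting a nonzero self-stress. Then every vertex incident to an edge with nonzero tension has at least d+1 neighbors in G; in particular, G restricted to edges with nonzero tension has minimum degree at least d+1 on its support, and hence has at least d+2 vertices and at least (d+1)(d+2)/2 edges with nonzero tension. -/
open scoped Classical

open Finset

private lemma key_deg {n d : ℕ} (G : SimpleGraph (Fin n)) (p : Fin n → Fin d → ℝ)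
    (hgen : InGeneralPosition p) (w : Fin n → Fin n → ℝ) (hw : IsSelfStress G p w)
    (a : Fin n) (hb : ∃ b, G.Adj a b ∧ w a b ≠ 0) :
    d + 1 ≤ (Finset.univ.filter (fun b => G.Adj a b ∧ w a b ≠ 0)).card := by
  by_contra hcon
  push_neg at hcon
  set N : Finset (Fin n) := Finset.univ.filter (fun b => G.Adj a b ∧ w a b ≠ 0) with hN
  have haN : a ∉ N := by
    intro h
    exact G.loopless.irrefl a (mem_filter.mp h).2.1
  have hwz : ∀ j, j ∉ N → w a j = 0 := by
    intro j hj
    by_cases hadj : G.Adj a j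
    · by_contra hwj
      exact hj (mem_filter.mpr ⟨mem_univ _, hadj, hwj⟩)
    · exact hw.2.1 a j hadj
  set s : Finset (Fin n) := insert a N with hs
  have hcard : s.card ≤ d + 1 := by
    rw [hs, Finset.card_insert_of_notMem haN]; omega
  have hai := affineIndependent_iff.mp (hgen s hcard)
  set T : ℝ := ∑ k ∈ N, w a k with hT
  set g : Fin n → ℝ := fun j => if j = a then T else -(w a j) with hg
  have hgN : ∀ j ∈ N, g j = -(w a j) := by
    intro j hj
    have : j ≠ a := fun h => haN (h ▸ hj)
    simp [hg, this]
  have h1 : ∑ i : s, g i = 0 := by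
    rw [Finset.sum_coe_sort s g, hs, Finset.sum_insert haN]
    rw [Finset.sum_congr rfl hgN]
    simp [hg, hT]
  have heq : ∑ j ∈ N, w a j • (p a - p j) = 0 := by
    have := hw.2.2 a
    rw [← Finset.sum_subset (Finset.subset_univ N)] at this
    · exact this
    · intro j _ hj
      rw [hwz j hj, zero_smul]
  have h2 : ∑ i : s, g i • p i = 0 := by
    rw [Finset.sum_coe_sort s (fun j => g j • p j), hs, Finset.sum_insert haN]
    have : ∑ j ∈ N, g j • p j = -(∑ j ∈ N, w a j • p j) := by
      rw [← Finset.sum_neg_distrib]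
      refine Finset.sum_congr rfl fun j hj => ?_
      rw [hgN j hj, neg_smul]
    rw [this]
    have : g a = T := by simp [hg]
    rw [this]
    have expand : ∑ j ∈ N, w a j • (p a - p j)
        = T • p a - ∑ j ∈ N, w a j • p j := by
      rw [hT, Finset.sum_smul]
      rw [← Finset.sum_sub_distrib]
      refine Finset.sum_congr rfl fun j hj => ?_
      rw [smul_sub]
    rw [expand] at heq
    linear_combination (norm := abel) heq
  obtain ⟨b, hadj, hwb⟩ := hb
  have hbN : b ∈ N := mem_filter.mpr ⟨mem_univ _, hadj, hwb⟩
  have hbs : b ∈ s := Finset.mem_insert_of_mem hbN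
  have h0 : g b = 0 := hai Finset.univ (fun i => g i) h1 h2 ⟨b, hbs⟩ (mem_univ _)
  rw [hgN b hbN] at h0
  exact hwb (neg_eq_zero.mp h0)

/-- For a nonzero self-stress on a general-position framework: every vertex incident to an
edge of nonzero tension has at least `d+1` neighbors with nonzero tension (hence at least
`d+1` neighbors in `G`); consequently the support has at least `d+2` vertices and at least
`(d+1)(d+2)/2` edges of nonzero tension. -/
theorem support_size_bounds {n d : ℕ} (G : SimpleGraph (Fin n))
    (p : Fin n → Fin d → ℝ) (hgen : InGeneralPosition p)
    (w : Fin n → Fin n → ℝ) (hw : IsSelfStress G p w)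
    (hne : ∃ i j, G.Adj i j ∧ w i j ≠ 0) :
    (∀ a, (∃ b, G.Adj a b ∧ w a b ≠ 0) →
      d + 1 ≤ (Finset.univ.filter (fun b => G.Adj a b ∧ w a b ≠ 0)).card ∧
      d + 1 ≤ (Finset.univ.filter (fun b => G.Adj a b)).card) ∧
    d + 2 ≤ (Finset.univ.filter (fun a => ∃ b, G.Adj a b ∧ w a b ≠ 0)).card ∧
    (d + 1) * (d + 2) / 2 ≤
      (Finset.univ.filter
        (fun e : Fin n × Fin n => e.1 < e.2 ∧ G.Adj e.1 e.2 ∧ w e.1 e.2 ≠ 0)).card := by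
  have hkey : ∀ a, (∃ b, G.Adj a b ∧ w a b ≠ 0) →
      d + 1 ≤ (Finset.univ.filter (fun b => G.Adj a b ∧ w a b ≠ 0)).card :=
    fun a ha => key_deg G p hgen w hw a ha
  refine ⟨fun a ha => ⟨hkey a ha, le_trans (hkey a ha) (Finset.card_le_card ?_)⟩, ?_, ?_⟩
  · intro x hx
    rw [mem_filter] at hx ⊢
    exact ⟨hx.1, hx.2.1⟩
  · -- d + 2 ≤ #support
    obtain ⟨i, j, hij, hwij⟩ := hne
    set Ni := Finset.univ.filter (fun b => G.Adj i b ∧ w i b ≠ 0) with hNi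
    have hiN : i ∉ Ni := fun h => G.loopless.irrefl i (mem_filter.mp h).2.1
    have hsub : insert i Ni ⊆ Finset.univ.filter (fun a => ∃ b, G.Adj a b ∧ w a b ≠ 0) := by
      intro x hx
      rcases Finset.mem_insert.mp hx with h | h
      · subst h; exact mem_filter.mpr ⟨mem_univ _, j, hij, hwij⟩
      · rcases mem_filter.mp h with ⟨-, hadj, hwx⟩
        exact mem_filter.mpr ⟨mem_univ _, i, hadj.symm, by rw [← hw.1]; exact hwx⟩
    have h1 := Finset.card_le_card hsub
    rw [Finset.card_insert_of_notMem hiN] at h1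
    have h2 := hkey i ⟨j, hij, hwij⟩
    rw [← hNi] at h2
    omega
  · -- edge count
    set Nf : Fin n → Finset (Fin n) :=
      fun a => Finset.univ.filter (fun b => G.Adj a b ∧ w a b ≠ 0) with hNf
    set S := Finset.univ.filter (fun a : Fin n => ∃ b, G.Adj a b ∧ w a b ≠ 0) with hS
    have hScard : d + 2 ≤ S.card := by
      obtain ⟨i, j, hij, hwij⟩ := hne
      have hiN : i ∉ Nf i := fun h => G.loopless.irrefl i (mem_filter.mp h).2.1
      have hsub : insert i (Nf i) ⊆ S := by
        intro x hx
        rcases Finset.mem_insert.mp hx with h | h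
        · subst h; exact mem_filter.mpr ⟨mem_univ _, j, hij, hwij⟩
        · rcases mem_filter.mp h with ⟨-, hadj, hwx⟩
          exact mem_filter.mpr ⟨mem_univ _, i, hadj.symm, by rw [← hw.1]; exact hwx⟩
      have h1 := Finset.card_le_card hsub
      rw [Finset.card_insert_of_notMem hiN] at h1
      have h2 : d + 1 ≤ (Nf i).card := hkey i ⟨j, hij, hwij⟩
      omega
    set O := Finset.univ.filter
      (fun e : Fin n × Fin n => G.Adj e.1 e.2 ∧ w e.1 e.2 ≠ 0) with hO
    have hOcard : O.card = ∑ a, (Nf a).card := by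
      rw [Finset.card_eq_sum_card_fiberwise
        (f := Prod.fst) (t := Finset.univ) (fun e _ => mem_univ _)]
      refine Finset.sum_congr rfl fun a _ => ?_
      have himg : O.filter (fun e => e.1 = a) = (Nf a).image (fun b => (a, b)) := by
        ext ⟨x, y⟩
        simp only [hO, hNf, Finset.mem_filter, Finset.mem_univ, true_and,
          Finset.mem_image, Prod.mk.injEq]
        constructor
        · rintro ⟨⟨hadj, hwxy⟩, rfl⟩
          exact ⟨y, ⟨hadj, hwxy⟩, rfl, rfl⟩
        · rintro ⟨b, ⟨hadj, hwb⟩, rfl, rfl⟩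
          exact ⟨⟨hadj, hwb⟩, rfl⟩
      rw [himg, Finset.card_image_of_injective _ (fun b c h => congrArg Prod.snd h)]
    have hsum : (d + 1) * (d + 2) ≤ ∑ a, (Nf a).card := by
      have h1 : S.card * (d + 1) ≤ ∑ a ∈ S, (Nf a).card := by
        have := Finset.card_nsmul_le_sum S (fun a => (Nf a).card) (d + 1)
          (fun a ha => hkey a (mem_filter.mp ha).2)
        simpa using this
      have h2 : ∑ a ∈ S, (Nf a).card ≤ ∑ a, (Nf a).card :=
        Finset.sum_le_sum_of_subset (Finset.subset_univ S)
      calc (d + 1) * (d + 2) ≤ (d + 1) * S.card := Nat.mul_le_mul_left _ hScard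
        _ = S.card * (d + 1) := Nat.mul_comm _ _
        _ ≤ _ := le_trans h1 h2
    set E := Finset.univ.filter
      (fun e : Fin n × Fin n => e.1 < e.2 ∧ G.Adj e.1 e.2 ∧ w e.1 e.2 ≠ 0) with hE
    set E' := Finset.univ.filter
      (fun e : Fin n × Fin n => e.2 < e.1 ∧ G.Adj e.1 e.2 ∧ w e.1 e.2 ≠ 0) with hE'
    have hEE' : E'.card = E.card := by
      apply Finset.card_nbij' (i := Prod.swap) (j := Prod.swap)
      · rintro ⟨x, y⟩ hx
        rcases mem_filter.mp hx with ⟨-, hlt, hadj, hwxy⟩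
        exact mem_filter.mpr ⟨mem_univ _, hlt, hadj.symm, by rw [← hw.1]; exact hwxy⟩
      · rintro ⟨x, y⟩ hx
        rcases mem_filter.mp hx with ⟨-, hlt, hadj, hwxy⟩
        exact mem_filter.mpr ⟨mem_univ _, hlt, hadj.symm, by rw [← hw.1]; exact hwxy⟩
      · rintro ⟨x, y⟩ _; rfl
      · rintro ⟨x, y⟩ _; rfl
    have hOsum : O.card = E.card + E'.card := by
      rw [← Finset.card_union_of_disjoint]
      · congr 1
        ext ⟨x, y⟩
        simp only [hO, hE, hE', Finset.mem_union, Finset.mem_filter, Finset.mem_univ,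
          true_and]
        constructor
        · rintro ⟨hadj, hwxy⟩
          rcases lt_or_gt_of_ne hadj.ne with h | h
          · exact Or.inl ⟨h, hadj, hwxy⟩
          · exact Or.inr ⟨h, hadj, hwxy⟩
        · rintro (⟨-, h⟩ | ⟨-, h⟩) <;> exact h
      · rw [Finset.disjoint_left]
        rintro ⟨x, y⟩ hx hy
        exact absurd (mem_filter.mp hy).2.1 (asymm (mem_filter.mp hx).2.1)
    have : (d + 1) * (d + 2) ≤ 2 * E.card := by
      rw [hOcard] at hOsum
      omega
    omega
end

section
/- Consider the graph of the octahedron (triangular antiprism) on vertices 1..6 with edges {12,13,14,15,23,25,26,34,36,45,46,56}, realized at p_1=(0,0,0), p_2=(1,1,1), p_3=(0,1,0), p_4=(1,0,0), p_5=(0,0,1), and p_6=(x,y,z). If this framework admits a self-stress that is nonzero on every edge, then x² - y² - z² - x + y + z = 0. -/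
/-- The edges of the octahedron (triangular antiprism) graph on vertices `0,…,5`
(corresponding to `12,13,14,15,23,25,26,34,36,45,46,56` in 1-based labels). -/
def octEdges : Finset (Fin 6 × Fin 6) :=
  {(0, 1), (0, 2), (0, 3), (0, 4), (1, 2), (1, 4), (1, 5), (2, 3), (2, 5), (3, 4),
    (3, 5), (4, 5)}

/-- `i` and `j` are adjacent in the octahedron graph. -/
def octAdj (i j : Fin 6) : Prop := (i, j) ∈ octEdges ∨ (j, i) ∈ octEdges

/-!
Only the equilibrium conditions at `p₁, p₂, p₃` are needed (labels as in the statement).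
Equilibrium at `p₂` expresses `ω₁₂` and `ω₂₃` through `ω₂₆`, equilibrium at `p₃` expresses
`ω₁₃` and `ω₂₃` through `ω₃₆`, and equilibrium at `p₁` gives `ω₁₂ + ω₁₃ = 0`. Together with
the two expressions for `ω₂₃` this says that `(ω₂₆, ω₃₆) ≠ 0` lies in the kernel of a `2 × 2`
matrix, whose determinant is `-(x² - y² - z² - x + y + z)`.
-/

instance : DecidableRel octAdj := fun _ _ => inferInstanceAs (Decidable (_ ∨ _))

lemma stress_apply_eq_zero {ι κ R : Type*} [Fintype ι] [Ring R] {w : ι → ι → R} {p : ι → κ → R}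
    {i : ι} (h : ∑ j, w i j • (p i - p j) = 0) (c : κ) :
    ∑ j, w i j * (p i c - p j c) = 0 := by
  simpa [Finset.sum_apply] using congrFun h c

def octPositions (x y z : ℝ) : Fin 6 → Fin 3 → ℝ :=
  ![![0, 0, 0], ![1, 1, 1], ![0, 1, 0], ![1, 0, 0], ![0, 0, 1], ![x, y, z]]

def octStressMatrix (x y z : ℝ) : Matrix (Fin 2) (Fin 2) ℝ :=
  !![y + z - x - 1, x + y - z - 1; x - y, z]

lemma det_octStressMatrix (x y z : ℝ) :
    (octStressMatrix x y z).det = -(x ^ 2 - y ^ 2 - z ^ 2 - x + y + z) := by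
  rw [octStressMatrix, Matrix.det_fin_two_of]
  ring

section

open Matrix

variable {x y z : ℝ} {w : Fin 6 → Fin 6 → ℝ}

lemma octEquilibrium_zero (w05 : w 0 5 = 0)
    (h : ∑ j, w 0 j • (octPositions x y z 0 - octPositions x y z j) = 0) :
    w 0 1 + w 0 2 = 0 := by
  have E := stress_apply_eq_zero h 1
  simp only [octPositions, Fin.sum_univ_six, cons_val, w05] at E
  linear_combination -E

lemma octEquilibrium_one (w13 : w 1 3 = 0)
    (h : ∑ j, w 1 j • (octPositions x y z 1 - octPositions x y z j) = 0) :
    w 1 0 = (y + z - x - 1) * w 1 5 ∧ w 1 2 = (x - y) * w 1 5 := by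
  have E0 := stress_apply_eq_zero h 0
  have E1 := stress_apply_eq_zero h 1
  have E2 := stress_apply_eq_zero h 2
  simp only [octPositions, Fin.sum_univ_six, cons_val, w13] at E0 E1 E2
  exact ⟨by linear_combination E1 + E2 - E0, by linear_combination E0 - E1⟩

lemma octEquilibrium_two (w24 : w 2 4 = 0)
    (h : ∑ j, w 2 j • (octPositions x y z 2 - octPositions x y z j) = 0) :
    w 2 0 = (x + y - z - 1) * w 2 5 ∧ w 2 1 = -z * w 2 5 := by
  have E0 := stress_apply_eq_zero h 0
  have E1 := stress_apply_eq_zero h 1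
  have E2 := stress_apply_eq_zero h 2
  simp only [octPositions, Fin.sum_univ_six, cons_val, w24] at E0 E1 E2
  exact ⟨by linear_combination E0 + E1 - E2, by linear_combination -E2⟩

lemma octStressMatrix_mulVec_eq_zero (hsymm : ∀ i j, w i j = w j i)
    (hsupp : ∀ i j, ¬ octAdj i j → w i j = 0)
    (heq : ∀ i, ∑ j, w i j • (octPositions x y z i - octPositions x y z j) = 0) :
    octStressMatrix x y z *ᵥ ![w 1 5, w 2 5] = 0 := by
  have h0 := octEquilibrium_zero (hsupp 0 5 (by decide)) (heq 0)
  obtain ⟨h10, h12⟩ := octEquilibrium_one (hsupp 1 3 (by decide)) (heq 1)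
  obtain ⟨h20, h21⟩ := octEquilibrium_two (hsupp 2 4 (by decide)) (heq 2)
  have row0 : (y + z - x - 1) * w 1 5 + (x + y - z - 1) * w 2 5 = 0 := by
    linear_combination h0 + hsymm 1 0 + hsymm 2 0 - h10 - h20
  have row1 : (x - y) * w 1 5 + z * w 2 5 = 0 := by
    linear_combination hsymm 1 2 - h12 + h21
  ext k
  fin_cases k <;> simpa [octStressMatrix, mulVec, vec2_dotProduct]

lemma quadric_eq_zero_of_octStressMatrix_mulVec {a b : ℝ} (ha : a ≠ 0)
    (h : octStressMatrix x y z *ᵥ ![a, b] = 0) : x ^ 2 - y ^ 2 - z ^ 2 - x + y + z = 0 := by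
  have hdet := exists_mulVec_eq_zero_iff.mp ⟨![a, b], fun hv => ha (congrFun hv 0), h⟩
  rw [det_octStressMatrix] at hdet
  exact neg_eq_zero.mp hdet

end

/-- If the octahedral framework at `p₁=(0,0,0)`, `p₂=(1,1,1)`, `p₃=(0,1,0)`, `p₄=(1,0,0)`,
`p₅=(0,0,1)`, `p₆=(x,y,z)` admits a self-stress nonzero on every edge, then
`x² - y² - z² - x + y + z = 0`. -/
theorem octahedron_tensegrity_necessary (x y z : ℝ)
    (p : Fin 6 → Fin 3 → ℝ)
    (hp : p = ![![0, 0, 0], ![1, 1, 1], ![0, 1, 0], ![1, 0, 0], ![0, 0, 1], ![x, y, z]])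
    (w : Fin 6 → Fin 6 → ℝ)
    (hsymm : ∀ i j, w i j = w j i)
    (hsupp : ∀ i j, ¬ octAdj i j → w i j = 0)
    (hnonzero : ∀ i j, octAdj i j → w i j ≠ 0)
    (heq : ∀ i, ∑ j, w i j • (p i - p j) = 0) :
    x ^ 2 - y ^ 2 - z ^ 2 - x + y + z = 0 := by
  subst hp
  exact quadric_eq_zero_of_octStressMatrix_mulVec (hnonzero 1 5 (by decide))
    (octStressMatrix_mulVec_eq_zero hsymm hsupp heq)
end
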